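/- Let ℓ(U,V,b) = (1/n) Σ_{i=1}^n log(1 + exp(−y_i (tr(Uᵀ X_i V) + b))). For every fixed U ∈ ℝ^{s×r}, the gradient map (V,b) ↦ (∇_V ℓ(U,V,b), ∇_b ℓ(U,V,b)) is Lipschitz continuous with Lipschitz constant L_v = (√2/n) Σ_{i=1}^n (‖X_iᵀ U‖_F + 1)², where the distance on pairs is ‖(V,b)−(Ṽ,b̃)‖ = √(‖V−Ṽ‖_F² + (b−b̃)²). -/

import Mathlib

open Matrix BigOperators

/-- Frobenius inner product of two real matrices. -/
noncomputable def frobInner {s r : ℕ} (A B : Matrix (Fin s) (Fin r) ℝ) : ℝ :=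
  ∑ i, ∑ j, A i j * B i j

/-- Frobenius norm of a real matrix. -/
noncomputable def frobNorm {s r : ℕ} (A : Matrix (Fin s) (Fin r) ℝ) : ℝ :=
  Real.sqrt (∑ i, ∑ j, (A i j) ^ 2)

/-- The bilinear logistic loss
ℓ(U,V,b) = (1/n) Σᵢ log(1 + exp(−yᵢ (tr(Uᵀ Xᵢ V) + b))). -/
noncomputable def bilinLoss {n s t r : ℕ} (X : Fin n → Matrix (Fin s) (Fin t) ℝ)
    (y : Fin n → ℝ) (U : Matrix (Fin s) (Fin r) ℝ) (V : Matrix (Fin t) (Fin r) ℝ)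
    (b : ℝ) : ℝ :=
  (1 / (n : ℝ)) * ∑ i, Real.log (1 + Real.exp (-(y i) * ((Uᵀ * X i * V).trace + b)))

/-- ∇_U ℓ(U,V,b) = −(1/n) Σᵢ (1 + exp[yᵢ(tr(Uᵀ Xᵢ V) + b)])⁻¹ yᵢ Xᵢ V. -/
noncomputable def gradU {n s t r : ℕ} (X : Fin n → Matrix (Fin s) (Fin t) ℝ)
    (y : Fin n → ℝ) (U : Matrix (Fin s) (Fin r) ℝ) (V : Matrix (Fin t) (Fin r) ℝ)
    (b : ℝ) : Matrix (Fin s) (Fin r) ℝ :=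
  (-(1 / (n : ℝ))) •
    ∑ i, ((1 + Real.exp (y i * ((Uᵀ * X i * V).trace + b)))⁻¹ * y i) • (X i * V)

/-- ∇_b ℓ(U,V,b) = −(1/n) Σᵢ (1 + exp[yᵢ(tr(Uᵀ Xᵢ V) + b)])⁻¹ yᵢ. -/
noncomputable def gradB {n s t r : ℕ} (X : Fin n → Matrix (Fin s) (Fin t) ℝ)
    (y : Fin n → ℝ) (U : Matrix (Fin s) (Fin r) ℝ) (V : Matrix (Fin t) (Fin r) ℝ)
    (b : ℝ) : ℝ :=
  (-(1 / (n : ℝ))) * ∑ i, (1 + Real.exp (y i * ((Uᵀ * X i * V).trace + b)))⁻¹ * y i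

/-- ∇_V ℓ(U,V,b) = −(1/n) Σᵢ (1 + exp[yᵢ(tr(Uᵀ Xᵢ V) + b)])⁻¹ yᵢ Xᵢᵀ U. -/
noncomputable def gradV {n s t r : ℕ} (X : Fin n → Matrix (Fin s) (Fin t) ℝ)
    (y : Fin n → ℝ) (U : Matrix (Fin s) (Fin r) ℝ) (V : Matrix (Fin t) (Fin r) ℝ)
    (b : ℝ) : Matrix (Fin t) (Fin r) ℝ :=
  (-(1 / (n : ℝ))) •
    ∑ i, ((1 + Real.exp (y i * ((Uᵀ * X i * V).trace + b)))⁻¹ * y i) • ((X i)ᵀ * U)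

/-! The sample weights `(1 + exp (yᵢ mᵢ))⁻¹ yᵢ` of both gradients depend on `(V, b)` only through
the margins `mᵢ = ⟪Xᵢᵀ U, V⟫_F + b`, and the sigmoid is `1/4`-Lipschitz, so each weight moves by at
most `|Δmᵢ| ≤ (‖Xᵢᵀ U‖_F + 1) ‖(ΔV, Δb)‖` (Cauchy–Schwarz). The gradients are the weight differences
summed against `Xᵢᵀ U` and against `1`; bounding the Euclidean norm of the pair by the sum of the two
norms gives the constant `(1/n) Σᵢ (‖Xᵢᵀ U‖_F + 1)² ≤ L_v`. -/

open Real in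
theorem Real.lipschitzWith_sigmoid : LipschitzWith 4⁻¹ sigmoid := by
  refine lipschitzWith_of_nnnorm_deriv_le differentiable_sigmoid fun x => ?_
  rw [← NNReal.coe_le_coe, coe_nnnorm, deriv_sigmoid, norm_eq_abs, NNReal.coe_inv]
  have h0 := sigmoid_nonneg x
  have h1 := sigmoid_le_one x
  rw [abs_of_nonneg (by nlinarith)]
  norm_num
  nlinarith [sq_nonneg (sigmoid x - 1 / 2)]

open Real in
theorem abs_inv_one_add_exp_mul_sub_le (y z z' : ℝ) :
    |(1 + exp (y * z))⁻¹ * y - (1 + exp (y * z'))⁻¹ * y| ≤ y ^ 2 / 4 * |z - z'| := by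
  have hσ : ∀ u, (1 + exp (y * u))⁻¹ = sigmoid (-(y * u)) := fun u => by
    rw [sigmoid_def, neg_neg]
  have hlip := lipschitzWith_sigmoid.dist_le_mul (-(y * z)) (-(y * z'))
  rw [dist_eq, dist_eq, ← hσ, ← hσ] at hlip
  calc |(1 + exp (y * z))⁻¹ * y - (1 + exp (y * z'))⁻¹ * y|
      = |(1 + exp (y * z))⁻¹ - (1 + exp (y * z'))⁻¹| * |y| := by rw [← sub_mul, abs_mul]
    _ ≤ (4⁻¹ * |-(y * z) - -(y * z')|) * |y| := by gcongr; exact_mod_cast hlip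
    _ = y ^ 2 / 4 * |z - z'| := by
      rw [show -(y * z) - -(y * z') = y * (z' - z) by ring, abs_mul, abs_sub_comm, ← sq_abs y]
      ring

noncomputable def matrixToEuclidean {m k : ℕ} :
    Matrix (Fin m) (Fin k) ℝ →ₗ[ℝ] EuclideanSpace ℝ (Fin m × Fin k) where
  toFun A := WithLp.toLp 2 fun p => A p.1 p.2
  map_add' _ _ := rfl
  map_smul' _ _ := rfl

@[simp]
theorem matrixToEuclidean_apply {m k : ℕ} (A : Matrix (Fin m) (Fin k) ℝ) (p : Fin m × Fin k) :
    matrixToEuclidean A p = A p.1 p.2 := rfl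

theorem frobNorm_eq_norm {m k : ℕ} (A : Matrix (Fin m) (Fin k) ℝ) :
    frobNorm A = ‖matrixToEuclidean A‖ := by
  simp [EuclideanSpace.norm_eq, frobNorm, Fintype.sum_prod_type]

theorem frobInner_eq_inner {m k : ℕ} (A B : Matrix (Fin m) (Fin k) ℝ) :
    frobInner A B = inner ℝ (matrixToEuclidean A) (matrixToEuclidean B) := by
  simp [frobInner, PiLp.inner_apply, Fintype.sum_prod_type, mul_comm]

theorem abs_frobInner_le {m k : ℕ} (A B : Matrix (Fin m) (Fin k) ℝ) :
    |frobInner A B| ≤ frobNorm A * frobNorm B := by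
  rw [frobInner_eq_inner, frobNorm_eq_norm, frobNorm_eq_norm]
  exact abs_real_inner_le_norm _ _

theorem trace_transpose_mul_mul_eq_frobInner {s t r : ℕ} (U : Matrix (Fin s) (Fin r) ℝ)
    (X : Matrix (Fin s) (Fin t) ℝ) (W : Matrix (Fin t) (Fin r) ℝ) :
    (Uᵀ * X * W).trace = frobInner (Xᵀ * U) W := by
  simp only [Matrix.trace, Matrix.diag, Matrix.mul_apply, Matrix.transpose_apply, frobInner,
    Finset.sum_mul]
  rw [Finset.sum_comm]
  refine Finset.sum_congr rfl fun j _ => Finset.sum_congr rfl fun k _ =>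
    Finset.sum_congr rfl fun i _ => ?_
  ring

theorem Real.sqrt_sq_add_sq_le_abs_add_abs (x y : ℝ) : √(x ^ 2 + y ^ 2) ≤ |x| + |y| := by
  rw [Real.sqrt_le_left (by positivity), add_sq, sq_abs, sq_abs]
  nlinarith [abs_nonneg x, abs_nonneg y]

theorem norm_sum_smul_add_abs_sum_le {ι E : Type*} [SeminormedAddCommGroup E] [NormedSpace ℝ E]
    (s : Finset ι) (d : ι → ℝ) (a : ι → E) {D : ℝ} (hd : ∀ i ∈ s, |d i| ≤ (‖a i‖ + 1) * D) :
    ‖∑ i ∈ s, d i • a i‖ + |∑ i ∈ s, d i| ≤ (∑ i ∈ s, (‖a i‖ + 1) ^ 2) * D := by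
  calc ‖∑ i ∈ s, d i • a i‖ + |∑ i ∈ s, d i|
      ≤ ∑ i ∈ s, ‖d i • a i‖ + ∑ i ∈ s, |d i| :=
        add_le_add (norm_sum_le _ _) (Finset.abs_sum_le_sum_abs _ _)
    _ = ∑ i ∈ s, |d i| * (‖a i‖ + 1) := by
        simp only [norm_smul, Real.norm_eq_abs, ← Finset.sum_add_distrib, mul_add_one]
    _ ≤ ∑ i ∈ s, (‖a i‖ + 1) * D * (‖a i‖ + 1) :=
        Finset.sum_le_sum fun i hi => by gcongr; exact hd i hi
    _ = (∑ i ∈ s, (‖a i‖ + 1) ^ 2) * D := by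
        rw [Finset.sum_mul]
        exact Finset.sum_congr rfl fun i _ => by ring

theorem abs_trace_add_sub_le {s t r : ℕ} (U : Matrix (Fin s) (Fin r) ℝ)
    (X : Matrix (Fin s) (Fin t) ℝ) (V V' : Matrix (Fin t) (Fin r) ℝ) (b b' : ℝ) :
    |((Uᵀ * X * V).trace + b) - ((Uᵀ * X * V').trace + b')|
      ≤ (frobNorm (Xᵀ * U) + 1) * √(frobNorm (V - V') ^ 2 + (b - b') ^ 2) := by
  set D := √(frobNorm (V - V') ^ 2 + (b - b') ^ 2)
  have hV : frobNorm (V - V') ≤ D :=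
    (le_abs_self _).trans (Real.abs_le_sqrt (le_add_of_nonneg_right (sq_nonneg _)))
  have hb : |b - b'| ≤ D := Real.abs_le_sqrt (le_add_of_nonneg_left (sq_nonneg _))
  have hA : 0 ≤ frobNorm (Xᵀ * U) := Real.sqrt_nonneg _
  calc |((Uᵀ * X * V).trace + b) - ((Uᵀ * X * V').trace + b')|
      = |frobInner (Xᵀ * U) (V - V') + (b - b')| := by
        rw [← trace_transpose_mul_mul_eq_frobInner, Matrix.mul_sub, Matrix.trace_sub]
        ring_nf
    _ ≤ frobNorm (Xᵀ * U) * frobNorm (V - V') + |b - b'| :=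
        (abs_add_le _ _).trans (add_le_add_left (abs_frobInner_le _ _) _)
    _ ≤ (frobNorm (Xᵀ * U) + 1) * D := by nlinarith

noncomputable def logisticWeight {n s t r : ℕ} (X : Fin n → Matrix (Fin s) (Fin t) ℝ)
    (y : Fin n → ℝ) (U : Matrix (Fin s) (Fin r) ℝ) (V : Matrix (Fin t) (Fin r) ℝ) (b : ℝ)
    (i : Fin n) : ℝ :=
  (1 + Real.exp (y i * ((Uᵀ * X i * V).trace + b)))⁻¹ * y i

section Gradients

variable {n s t r : ℕ} (X : Fin n → Matrix (Fin s) (Fin t) ℝ) (y : Fin n → ℝ)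
  (U : Matrix (Fin s) (Fin r) ℝ) (V V' : Matrix (Fin t) (Fin r) ℝ) (b b' : ℝ)

theorem gradV_sub_gradV : gradV X y U V b - gradV X y U V' b' = (-(1 / (n : ℝ))) •
    ∑ i, (logisticWeight X y U V b i - logisticWeight X y U V' b' i) • ((X i)ᵀ * U) := by
  simp only [gradV, logisticWeight, ← smul_sub, ← Finset.sum_sub_distrib, sub_smul]

theorem gradB_sub_gradB : gradB X y U V b - gradB X y U V' b' = (-(1 / (n : ℝ))) *
    ∑ i, (logisticWeight X y U V b i - logisticWeight X y U V' b' i) := by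
  simp only [gradB, logisticWeight, ← mul_sub, ← Finset.sum_sub_distrib]

theorem abs_logisticWeight_sub_le {i : Fin n} (hy : y i ^ 2 ≤ 4) :
    |logisticWeight X y U V b i - logisticWeight X y U V' b' i|
      ≤ (frobNorm ((X i)ᵀ * U) + 1) * √(frobNorm (V - V') ^ 2 + (b - b') ^ 2) :=
  calc |logisticWeight X y U V b i - logisticWeight X y U V' b' i|
      ≤ y i ^ 2 / 4 * |((Uᵀ * X i * V).trace + b) - ((Uᵀ * X i * V').trace + b')| :=
        abs_inv_one_add_exp_mul_sub_le _ _ _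
    _ ≤ |((Uᵀ * X i * V).trace + b) - ((Uᵀ * X i * V').trace + b')| :=
        mul_le_of_le_one_left (abs_nonneg _) (by linarith)
    _ ≤ _ := abs_trace_add_sub_le _ _ _ _ _ _

end Gradients

theorem gradVb_lipschitz_general
    (n s t r : ℕ)
    (X : Fin n → Matrix (Fin s) (Fin t) ℝ) (y : Fin n → ℝ)
    (hy : ∀ i, y i = 1 ∨ y i = -1)
    (U : Matrix (Fin s) (Fin r) ℝ)
    (V V' : Matrix (Fin t) (Fin r) ℝ) (b b' : ℝ) :
    Real.sqrt ((frobNorm (gradV X y U V b - gradV X y U V' b')) ^ 2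
        + (gradB X y U V b - gradB X y U V' b') ^ 2)
      ≤ (Real.sqrt 2 / (n : ℝ)) * (∑ i, (frobNorm ((X i)ᵀ * U) + 1) ^ 2)
          * Real.sqrt ((frobNorm (V - V')) ^ 2 + (b - b') ^ 2) := by
  set D := √(frobNorm (V - V') ^ 2 + (b - b') ^ 2)
  set d := fun i => logisticWeight X y U V b i - logisticWeight X y U V' b' i
  set a := fun i => matrixToEuclidean ((X i)ᵀ * U)
  have hd (i : Fin n) (_ : i ∈ Finset.univ) : |d i| ≤ (‖a i‖ + 1) * D := by
    rw [← frobNorm_eq_norm]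
    exact abs_logisticWeight_sub_le X y U V V' b b' (by rcases hy i with h | h <;> norm_num [h])
  have h1n : 0 ≤ 1 / (n : ℝ) := by positivity
  calc _ ≤ |frobNorm (gradV X y U V b - gradV X y U V' b')|
        + |gradB X y U V b - gradB X y U V' b'| := Real.sqrt_sq_add_sq_le_abs_add_abs _ _
    _ = 1 / n * (‖∑ i, d i • a i‖ + |∑ i, d i|) := by
      rw [gradV_sub_gradV, gradB_sub_gradB, frobNorm_eq_norm, abs_norm, map_smul, map_sum,
        norm_smul, abs_mul, Real.norm_eq_abs, abs_neg, abs_of_nonneg h1n, mul_add]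
      simp only [map_smul, d, a]
    _ ≤ 1 / n * ((∑ i, (‖a i‖ + 1) ^ 2) * D) := by
      gcongr; exact norm_sum_smul_add_abs_sum_le _ d a hd
    _ ≤ √2 / n * (∑ i, (frobNorm ((X i)ᵀ * U) + 1) ^ 2) * D := by
      simp only [a, ← frobNorm_eq_norm, mul_assoc]
      gcongr
      exact Real.one_le_sqrt.mpr one_le_two

/-- Lemma 1, part (b): for every fixed `U`, the map `(V, b) ↦ (∇_V ℓ, ∇_b ℓ)`
is Lipschitz continuous with constant `L_v = (√2/n) Σᵢ (‖Xᵢᵀ U‖_F + 1)²`,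
with respect to the joint Euclidean distance `√(‖V − V'‖_F² + (b − b')²)`. -/
theorem gradVb_lipschitz
    (n s t r : ℕ) (hn : 0 < n) (hr : 1 ≤ r)
    (X : Fin n → Matrix (Fin s) (Fin t) ℝ) (y : Fin n → ℝ)
    (hy : ∀ i, y i = 1 ∨ y i = -1)
    (U : Matrix (Fin s) (Fin r) ℝ)
    (V V' : Matrix (Fin t) (Fin r) ℝ) (b b' : ℝ) :
    Real.sqrt ((frobNorm (gradV X y U V b - gradV X y U V' b')) ^ 2
        + (gradB X y U V b - gradB X y U V' b') ^ 2)
      ≤ (Real.sqrt 2 / (n : ℝ)) * (∑ i, (frobNorm ((X i)ᵀ * U) + 1) ^ 2)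
          * Real.sqrt ((frobNorm (V - V')) ^ 2 + (b - b') ^ 2) :=
  gradVb_lipschitz_general n s t r X y hy U V V' b b'
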